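/- arXiv:math/9411221 — 4 statements merged into one kernel-verified Lean document; each statement's English description precedes it below -/
import Mathlib

section
/- Let D be a digraph with an atom A and a part B. If A ∩ B and A ∖ B are both nonempty, then |N(A) ∖ (B ∪ N(B))| < |N(B) ∩ A|. -/
open Classical

/-- A digraph (given by its edge relation `E`) is strongly connected iff for every
ordered pair of vertices there is a directed path from the first to the second. -/
def SC {V : Type*} (E : V → V → Prop) : Prop :=
  ∀ a b : V, Relation.ReflTransGen E a b

/-- The subdigraph induced on `A` is strongly connected. -/
def SCOn {V : Type*} (E : V → V → Prop) (A : Set V) : Prop :=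
  ∀ a ∈ A, ∀ b ∈ A, Relation.ReflTransGen (fun x y => x ∈ A ∧ y ∈ A ∧ E x y) a b

/-- Out-neighborhood of a set of vertices. -/
def Nout {V : Type*} (E : V → V → Prop) (A : Set V) : Set V :=
  {x | x ∉ A ∧ ∃ y ∈ A, E y x}

/-- Vertex connectivity: the least cardinality of a set `T` of vertices whose removal
leaves a non-strongly-connected digraph; `Nat.card V - 1` if no such `T` exists. -/
noncomputable def kappa {V : Type*} [Finite V] (E : V → V → Prop) : ℕ :=
  if ∃ T : Set V, ¬ SCOn E Tᶜ then
    sInf {m | ∃ T : Set V, T.ncard = m ∧ ¬ SCOn E Tᶜ}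
  else Nat.card V - 1

/-- A part of a digraph. -/
def IsPart {V : Type*} (E : V → V → Prop) (A : Set V) : Prop :=
  A.Nonempty ∧ ((A ∪ Nout E A)ᶜ : Set V).Nonempty

/-- An atom: a part with `|N(A)| = κ` of minimum cardinality among such parts. -/
def IsAtomD {V : Type*} [Finite V] (E : V → V → Prop) (A : Set V) : Prop :=
  IsPart E A ∧ (Nout E A).ncard = kappa E ∧
    ∀ B : Set V, IsPart E B → (Nout E B).ncard = kappa E → A.ncard ≤ B.ncard

/-- Removing the out-neighborhood of a part leaves a non-strongly-connected digraph. -/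
lemma part_not_SCOn {V : Type*} (E : V → V → Prop) (P : Set V) (hP : IsPart E P) :
    ¬ SCOn E (Nout E P)ᶜ := by
  obtain ⟨⟨a, ha⟩, ⟨b, hb⟩⟩ := hP
  intro h
  have haN : a ∈ (Nout E P)ᶜ := fun h' => h'.1 ha
  have hbN : b ∈ (Nout E P)ᶜ := fun h' => hb (Or.inr h')
  have hpath := h a haN b hbN
  have key : ∀ c, Relation.ReflTransGen
      (fun x y => x ∈ (Nout E P)ᶜ ∧ y ∈ (Nout E P)ᶜ ∧ E x y) a c → c ∈ P := by
    intro c hc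
    induction hc with
    | refl => exact ha
    | @tail x y _ hxy ih =>
      by_contra hyP
      exact hxy.2.1 ⟨hyP, x, ih, hxy.2.2⟩
  exact hb (Or.inl (key b hpath))

/-- `kappa` is at most the size of the out-neighborhood of any part. -/
lemma kappa_le_part {V : Type*} [Finite V] (E : V → V → Prop) (P : Set V)
    (hP : IsPart E P) : kappa E ≤ (Nout E P).ncard := by
  have hex : ∃ T : Set V, ¬ SCOn E Tᶜ := ⟨Nout E P, part_not_SCOn E P hP⟩
  rw [kappa, if_pos hex]
  exact Nat.sInf_le ⟨Nout E P, rfl, part_not_SCOn E P hP⟩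

/-- If `A` is an atom and `B` a part of a digraph with `A ∩ B` and `A ∖ B` nonempty,
then `|N(A) ∖ (B ∪ N(B))| < |N(B) ∩ A|`. -/
theorem stmt_2 {V : Type*} [Finite V] (E : V → V → Prop) (A B : Set V)
    (hA : IsAtomD E A) (hB : IsPart E B)
    (h1 : (A ∩ B).Nonempty) (h2 : (A \ B).Nonempty) :
    (Nout E A \ (B ∪ Nout E B)).ncard < (Nout E B ∩ A).ncard := by
  by_contra hcon
  push_neg at hcon
  -- A ∩ B is a part
  have hpart : IsPart E (A ∩ B) := by
    refine ⟨h1, ?_⟩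
    obtain ⟨b, hb⟩ := hB.2
    refine ⟨b, fun hmem => ?_⟩
    rcases hmem with hmem | hmem
    · exact hb (Or.inl hmem.2)
    · obtain ⟨hbn, y, hy, hE⟩ := hmem
      by_cases hbB : b ∈ B
      · exact hb (Or.inl hbB)
      · exact hb (Or.inr ⟨hbB, y, hy.2, hE⟩)
  -- covering of N(A ∩ B)
  have hcov : Nout E (A ∩ B) ⊆ (Nout E A ∩ B) ∪ (Nout E B ∩ A) ∪ (Nout E A ∩ Nout E B) := by
    rintro x ⟨hx, y, hy, hE⟩
    by_cases hxA : x ∈ A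
    · have hxB : x ∉ B := fun hxB => hx ⟨hxA, hxB⟩
      exact Or.inl (Or.inr ⟨⟨hxB, y, hy.2, hE⟩, hxA⟩)
    · have hxNA : x ∈ Nout E A := ⟨hxA, y, hy.1, hE⟩
      by_cases hxB : x ∈ B
      · exact Or.inl (Or.inl ⟨hxNA, hxB⟩)
      · exact Or.inr ⟨hxNA, ⟨hxB, y, hy.2, hE⟩⟩
  -- partition of N(A)
  have hdisjBN : ∀ x, x ∈ B → x ∉ Nout E B := fun x hx h' => h'.1 hx
  have hNAeq : Nout E A =
      (Nout E A ∩ B) ∪ (Nout E A ∩ Nout E B) ∪ (Nout E A \ (B ∪ Nout E B)) := by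
    ext x
    constructor
    · intro hx
      by_cases hxB : x ∈ B
      · exact Or.inl (Or.inl ⟨hx, hxB⟩)
      · by_cases hxN : x ∈ Nout E B
        · exact Or.inl (Or.inr ⟨hx, hxN⟩)
        · exact Or.inr ⟨hx, fun h => h.elim hxB hxN⟩
    · intro hx
      rcases hx with (hx | hx) | hx
      · exact hx.1
      · exact hx.1
      · exact hx.1
  have d1 : Disjoint (Nout E A ∩ B) (Nout E A ∩ Nout E B) :=
    Set.disjoint_left.2 fun x hx h' => hdisjBN x hx.2 h'.2
  have d2 : Disjoint ((Nout E A ∩ B) ∪ (Nout E A ∩ Nout E B)) (Nout E A \ (B ∪ Nout E B)) := by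
    refine Set.disjoint_left.2 ?_
    intro x hx hx'
    rcases hx with hx | hx
    · exact hx'.2 (Or.inl hx.2)
    · exact hx'.2 (Or.inr hx.2)
  have hNAcard : (Nout E A).ncard =
      (Nout E A ∩ B).ncard + (Nout E A ∩ Nout E B).ncard
        + (Nout E A \ (B ∪ Nout E B)).ncard := by
    conv_lhs => rw [hNAeq]
    rw [Set.ncard_union_eq d2 (Set.toFinite _) (Set.toFinite _),
      Set.ncard_union_eq d1 (Set.toFinite _) (Set.toFinite _)]
  -- |N(A∩B)| ≤ κ
  have hub : (Nout E (A ∩ B)).ncard ≤ kappa E := by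
    have h3 : (Nout E (A ∩ B)).ncard ≤
        (Nout E A ∩ B).ncard + (Nout E B ∩ A).ncard + (Nout E A ∩ Nout E B).ncard := by
      calc (Nout E (A ∩ B)).ncard
          ≤ ((Nout E A ∩ B) ∪ (Nout E B ∩ A) ∪ (Nout E A ∩ Nout E B)).ncard :=
            Set.ncard_le_ncard hcov (Set.toFinite _)
        _ ≤ ((Nout E A ∩ B) ∪ (Nout E B ∩ A)).ncard + (Nout E A ∩ Nout E B).ncard :=
            Set.ncard_union_le _ _
        _ ≤ (Nout E A ∩ B).ncard + (Nout E B ∩ A).ncard + (Nout E A ∩ Nout E B).ncard :=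
            Nat.add_le_add_right (Set.ncard_union_le _ _) _
    have := hA.2.1
    omega
  have hlb : kappa E ≤ (Nout E (A ∩ B)).ncard := kappa_le_part E _ hpart
  have heq : (Nout E (A ∩ B)).ncard = kappa E := le_antisymm hub hlb
  have hmin := hA.2.2 (A ∩ B) hpart heq
  have hlt : (A ∩ B).ncard < A.ncard := by
    refine Set.ncard_lt_ncard ?_ (Set.toFinite A)
    constructor
    · exact Set.inter_subset_left
    · intro hsub
      obtain ⟨x, hxA, hxB⟩ := h2
      exact hxB (hsub hxA).2
  omega
end

section
/- Let D be a digraph on n vertices of vertex connectivity κ, let A be an atom of D, and let B be a part of D with |N(B)| = κ. If V(D) ∖ (A ∪ N(A) ∪ B ∪ N(B)) is nonempty, then either A ∩ B = ∅ or A ⊆ B. -/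
open Classical

lemma kappa_le_of_part {V : Type*} [Finite V] (E : V → V → Prop) (X : Set V)
    (hX : IsPart E X) : kappa E ≤ (Nout E X).ncard := by
  obtain ⟨⟨a, ha⟩, ⟨b, hb⟩⟩ := hX
  have hbX : b ∉ X := fun h => hb (Or.inl h)
  have hbN : b ∉ Nout E X := fun h => hb (Or.inr h)
  have haN : a ∉ Nout E X := fun h => h.1 ha
  have hT : ¬ SCOn E (Nout E X)ᶜ := by
    intro h
    have key : ∀ c, Relation.ReflTransGen
        (fun x y => x ∈ (Nout E X)ᶜ ∧ y ∈ (Nout E X)ᶜ ∧ E x y) a c → c ∈ X := by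
      intro c hc
      induction hc with
      | refl => exact ha
      | tail _ hstep ih =>
        by_contra hc'
        exact hstep.2.1 ⟨hc', _, ih, hstep.2.2⟩
    exact hbX (key b (h a haN b hbN))
  rw [kappa, if_pos ⟨_, hT⟩]
  exact Nat.sInf_le ⟨Nout E X, rfl, hT⟩

/-- If `A` is an atom, `B` is a part with `|N(B)| = κ`, and
`V ∖ (A ∪ N(A) ∪ B ∪ N(B))` is nonempty, then `A ∩ B = ∅` or `A ⊆ B`. -/
theorem stmt_3 {V : Type*} [Finite V] (E : V → V → Prop) (A B : Set V)
    (hA : IsAtomD E A) (hB : IsPart E B) (hBk : (Nout E B).ncard = kappa E)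
    (hne : ((A ∪ Nout E A ∪ B ∪ Nout E B)ᶜ : Set V).Nonempty) :
    A ∩ B = ∅ ∨ A ⊆ B := by
  by_cases hAB : A ∩ B = ∅
  · exact Or.inl hAB
  right
  have hABne : (A ∩ B).Nonempty := Set.nonempty_iff_ne_empty.2 hAB
  obtain ⟨z, hz⟩ := hne
  simp only [Set.mem_compl_iff, Set.mem_union, not_or] at hz
  obtain ⟨⟨⟨hzA, hzNA⟩, hzB⟩, hzNB⟩ := hz
  -- submodularity inclusions
  have h1 : Nout E (A ∩ B) ⊆ Nout E A ∪ Nout E B := by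
    rintro x ⟨hx, y, hy, hE⟩
    by_cases hxA : x ∈ A
    · exact Or.inr ⟨fun hxB => hx ⟨hxA, hxB⟩, y, hy.2, hE⟩
    · exact Or.inl ⟨hxA, y, hy.1, hE⟩
  have h2 : Nout E (A ∪ B) ⊆ Nout E A ∪ Nout E B := by
    rintro x ⟨hx, y, hy, hE⟩
    rcases hy with hy | hy
    · exact Or.inl ⟨fun h => hx (Or.inl h), y, hy, hE⟩
    · exact Or.inr ⟨fun h => hx (Or.inr h), y, hy, hE⟩
  have h3 : Nout E (A ∩ B) ∩ Nout E (A ∪ B) ⊆ Nout E A ∩ Nout E B := by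
    rintro x ⟨⟨_, y, hy, hE⟩, hx2, -⟩
    exact ⟨⟨fun h => hx2 (Or.inl h), y, hy.1, hE⟩,
           ⟨fun h => hx2 (Or.inr h), y, hy.2, hE⟩⟩
  -- parts
  have partI : IsPart E (A ∩ B) := by
    refine ⟨hABne, ⟨z, ?_⟩⟩
    rintro (⟨h, -⟩ | h)
    · exact hzA h
    · rcases h1 h with h | h
      · exact hzNA h
      · exact hzNB h
  have partU : IsPart E (A ∪ B) := by
    refine ⟨⟨hABne.choose, Or.inl hABne.choose_spec.1⟩, ⟨z, ?_⟩⟩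
    rintro ((h | h) | h)
    · exact hzA h
    · exact hzB h
    · rcases h2 h with h | h
      · exact hzNA h
      · exact hzNB h
  have kI := kappa_le_of_part E (A ∩ B) partI
  have kU := kappa_le_of_part E (A ∪ B) partU
  -- counting
  have hcount : (Nout E (A ∩ B)).ncard + (Nout E (A ∪ B)).ncard ≤
      (Nout E A).ncard + (Nout E B).ncard := by
    have e1 : (Nout E (A ∩ B)).ncard + (Nout E (A ∪ B)).ncard =
        (Nout E (A ∩ B) ∪ Nout E (A ∪ B)).ncard +
        (Nout E (A ∩ B) ∩ Nout E (A ∪ B)).ncard :=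
      (Set.ncard_union_add_ncard_inter _ _ (Set.toFinite _) (Set.toFinite _)).symm
    have e2 : (Nout E A).ncard + (Nout E B).ncard =
        (Nout E A ∪ Nout E B).ncard + (Nout E A ∩ Nout E B).ncard :=
      (Set.ncard_union_add_ncard_inter _ _ (Set.toFinite _) (Set.toFinite _)).symm
    rw [e1, e2]
    have m1 : (Nout E (A ∩ B) ∪ Nout E (A ∪ B)).ncard ≤
        (Nout E A ∪ Nout E B).ncard := by
      apply Set.ncard_le_ncard _ (Set.toFinite _)
      exact Set.union_subset h1 h2
    have m2 : (Nout E (A ∩ B) ∩ Nout E (A ∪ B)).ncard ≤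
        (Nout E A ∩ Nout E B).ncard :=
      Set.ncard_le_ncard h3 (Set.toFinite _)
    omega
  rw [hA.2.1, hBk] at hcount
  have hkI : (Nout E (A ∩ B)).ncard = kappa E := by omega
  have hmin := hA.2.2 (A ∩ B) partI hkI
  have heq : A ∩ B = A :=
    Set.eq_of_subset_of_ncard_le Set.inter_subset_left hmin (Set.toFinite _)
  intro a ha
  exact (heq.symm.subset ha).2
end

section
/- Let D be a digraph on n vertices of vertex connectivity κ. If every atom A of D satisfies 2|A| ≤ n − κ, then any two distinct atoms of D are disjoint. -/
/-!
The set function `A ↦ |N(A)|` is submodular. If two atoms `A`, `B` meet, `A ∩ B` is a part,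
so `|N(A ∩ B)| ≥ κ` and submodularity gives `|N(A ∪ B)| ≤ κ`. The size bound
`2|A|, 2|B| ≤ n − κ` leaves a vertex outside `A ∪ B ∪ N(A ∪ B)`, so `A ∪ B` is a part too;
hence both neighbourhoods have exactly `κ` vertices, and minimality of the atoms gives
`A = A ∩ B = B`.
-/

open Classical

section Digraph

variable {V : Type*} (E : V → V → Prop)

theorem disjoint_Nout (A : Set V) : Disjoint A (Nout E A) :=
  Set.disjoint_left.mpr fun _ hx hnx => hnx.1 hx

theorem mem_union_Nout {A : Set V} {x : V} :
    x ∈ A ∪ Nout E A ↔ x ∈ A ∨ ∃ y ∈ A, E y x := by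
  by_cases hx : x ∈ A <;> simp [Nout, hx]

theorem union_Nout_mono {A B : Set V} (h : A ⊆ B) : A ∪ Nout E A ⊆ B ∪ Nout E B := by
  intro x hx
  rw [mem_union_Nout] at hx ⊢
  exact hx.imp (@h x) fun ⟨y, hy, hyx⟩ => ⟨y, h hy, hyx⟩

theorem union_Nout_union_subset (A B : Set V) :
    (A ∪ B) ∪ Nout E (A ∪ B) ⊆ (A ∪ Nout E A) ∪ (B ∪ Nout E B) := by
  intro x hx
  rw [mem_union_Nout] at hx
  rw [Set.mem_union, mem_union_Nout, mem_union_Nout]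
  rcases hx with (h | h) | ⟨y, hy | hy, hyx⟩
  · exact Or.inl (Or.inl h)
  · exact Or.inr (Or.inl h)
  · exact Or.inl (Or.inr ⟨y, hy, hyx⟩)
  · exact Or.inr (Or.inr ⟨y, hy, hyx⟩)

theorem ncard_union_Nout [Finite V] (A : Set V) :
    (A ∪ Nout E A).ncard = A.ncard + (Nout E A).ncard :=
  Set.ncard_union_eq (disjoint_Nout E A)

/-- Submodularity of `|N(·)|`: compare `|X ∪ N(X)|` for `X = A ∩ B, A ∪ B` with the
intersection and union of `A ∪ N(A)` and `B ∪ N(B)`, then subtract `|X|`. -/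
theorem ncard_Nout_inter_add_ncard_Nout_union_le [Finite V] (A B : Set V) :
    (Nout E (A ∩ B)).ncard + (Nout E (A ∪ B)).ncard
      ≤ (Nout E A).ncard + (Nout E B).ncard := by
  have h_inter : ((A ∩ B) ∪ Nout E (A ∩ B)).ncard
      ≤ ((A ∪ Nout E A) ∩ (B ∪ Nout E B)).ncard :=
    Set.ncard_le_ncard (Set.subset_inter (union_Nout_mono E Set.inter_subset_left)
      (union_Nout_mono E Set.inter_subset_right))
  have h_union : ((A ∪ B) ∪ Nout E (A ∪ B)).ncard
      ≤ ((A ∪ Nout E A) ∪ (B ∪ Nout E B)).ncard :=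
    Set.ncard_le_ncard (union_Nout_union_subset E A B)
  have := Set.ncard_union_add_ncard_inter (A ∪ Nout E A) (B ∪ Nout E B)
  have := Set.ncard_union_add_ncard_inter A B
  have := ncard_union_Nout E (A ∩ B)
  have := ncard_union_Nout E (A ∪ B)
  have := ncard_union_Nout E A
  have := ncard_union_Nout E B
  omega

/-- No path inside `N(P)ᶜ` leaves `P`, so it cannot reach a vertex outside `P ∪ N(P)`. -/
theorem IsPart.not_SCOn_compl_Nout {P : Set V} (hP : IsPart E P) :
    ¬ SCOn E (Nout E P)ᶜ := by
  obtain ⟨⟨p, hp⟩, ⟨c, hc⟩⟩ := hP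
  intro hSC
  have stays_in_P : ∀ z, Relation.ReflTransGen
      (fun x y => x ∈ (Nout E P)ᶜ ∧ y ∈ (Nout E P)ᶜ ∧ E x y) p z → z ∈ P := by
    intro z hz
    induction hz with
    | refl => exact hp
    | tail _ hstep ih =>
      obtain ⟨-, hy, hE⟩ := hstep
      by_contra hyP
      exact hy ⟨hyP, _, ih, hE⟩
  exact hc (Or.inl (stays_in_P c (hSC p (fun h => h.1 hp) c (fun h => hc (Or.inr h)))))

theorem IsPart.kappa_le [Finite V] {P : Set V} (hP : IsPart E P) :
    kappa E ≤ (Nout E P).ncard := by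
  have h := hP.not_SCOn_compl_Nout
  rw [kappa, if_pos ⟨_, h⟩]
  exact Nat.sInf_le ⟨Nout E P, rfl, h⟩

theorem IsPart.inter {A B : Set V} (hA : IsPart E A) (hAB : (A ∩ B).Nonempty) :
    IsPart E (A ∩ B) := by
  obtain ⟨c, hc⟩ := hA.2
  exact ⟨hAB, c, fun h => hc (union_Nout_mono E Set.inter_subset_left h)⟩

theorem isPart_of_ncard_union_Nout_lt [Finite V] {A : Set V} (hA : A.Nonempty)
    (hlt : (A ∪ Nout E A).ncard < Nat.card V) : IsPart E A := by
  refine ⟨hA, Set.nonempty_compl.mpr fun h => ?_⟩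
  rw [h, Set.ncard_univ] at hlt
  exact lt_irrefl _ hlt

theorem IsAtomD.eq_of_subset [Finite V] {A C : Set V} (hA : IsAtomD E A) (hCA : C ⊆ A)
    (hC : IsPart E C) (hNC : (Nout E C).ncard = kappa E) : C = A :=
  Set.eq_of_subset_of_ncard_le hCA (hA.2.2 C hC hNC)

theorem IsAtomD.ncard_Nout_union_le [Finite V] {A B : Set V} (hA : IsAtomD E A)
    (hB : IsAtomD E B) (hAB : (A ∩ B).Nonempty) : (Nout E (A ∪ B)).ncard ≤ kappa E := by
  have hsub := ncard_Nout_inter_add_ncard_Nout_union_le E A B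
  rw [hA.2.1, hB.2.1] at hsub
  have := (hA.1.inter E hAB).kappa_le
  omega

theorem IsAtomD.eq_of_inter_nonempty [Finite V] {A B : Set V} (hA : IsAtomD E A)
    (hB : IsAtomD E B) (hAB : (A ∩ B).Nonempty) (hU : IsPart E (A ∪ B)) : A = B := by
  have hI : IsPart E (A ∩ B) := hA.1.inter E hAB
  have hsub := ncard_Nout_inter_add_ncard_Nout_union_le E A B
  rw [hA.2.1, hB.2.1] at hsub
  have := hI.kappa_le
  have := hU.kappa_le
  have hNI : (Nout E (A ∩ B)).ncard = kappa E := by omega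
  rw [← hA.eq_of_subset E Set.inter_subset_left hI hNI,
    hB.eq_of_subset E Set.inter_subset_right hI hNI]

end Digraph

/-- If every atom `A` of a digraph on `n` vertices of vertex connectivity `κ`
satisfies `2|A| ≤ n − κ`, then any two distinct atoms are disjoint. -/
theorem stmt_4 {V : Type*} [Finite V] (E : V → V → Prop)
    (hsmall : ∀ A : Set V, IsAtomD E A → 2 * A.ncard ≤ Nat.card V - kappa E) :
    ∀ A B : Set V, IsAtomD E A → IsAtomD E B → A ≠ B → A ∩ B = ∅ := by
  intro A B hA hB hne
  rw [← Set.not_nonempty_iff_eq_empty]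
  intro hAB
  refine hne (hA.eq_of_inter_nonempty E hB hAB (isPart_of_ncard_union_Nout_lt E
    (hA.1.1.mono Set.subset_union_left) ?_))
  have hκ : kappa E ≤ Nat.card V := hA.2.1 ▸ Set.ncard_le_card _
  have hA_small := hsmall A hA
  have hB_small := hsmall B hB
  have h_union := Set.ncard_union_add_ncard_inter A B
  have h_inter_pos := (Set.ncard_pos (Set.toFinite _)).mpr hAB
  have := ncard_union_Nout E (A ∪ B)
  have := hA.ncard_Nout_union_le E hB hAB
  omega
end

section
/- Let D be a digraph on n vertices of vertex connectivity κ which is not complete (i.e., some ordered pair of distinct vertices is not an edge). Then either D or its transpose D* has an atom A with 2|A| ≤ n − κ. -/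
open Classical

/-! If `A` is an atom of `D`, the vertices outside `A ∪ N(A)` form a part `C` of `D*` whose
out-neighbourhood in `D*` lies inside `N(A)`; as `κ(D*) = κ(D)`, an atom `B` of `D*` satisfies
`|B| ≤ |C| = n - κ - |A|`. Hence `|A| + |B| ≤ n - κ`, and the smaller of `A`, `B` does it. -/

section Reachability

variable {V : Type*} (E : V → V → Prop)

lemma SCOn.transpose {S : Set V} (h : SCOn E S) : SCOn (fun x y => E y x) S :=
  fun a ha b hb => Relation.reflTransGen_swap.mp <|
    Relation.ReflTransGen.mono (fun _ _ ⟨hx, hy, hxy⟩ => ⟨hy, hx, hxy⟩) _ _ (h b hb a ha)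

lemma scOn_transpose_iff (S : Set V) : SCOn (fun x y => E y x) S ↔ SCOn E S :=
  ⟨SCOn.transpose _, SCOn.transpose E⟩

lemma mem_of_reflTransGen_restrict {S B : Set V}
    (hB : ∀ x y, x ∈ B → y ∈ S → E x y → y ∈ B) {a b : V} (ha : a ∈ B)
    (h : Relation.ReflTransGen (fun x y => x ∈ S ∧ y ∈ S ∧ E x y) a b) : b ∈ B := by
  induction h with
  | refl => exact ha
  | tail _ hyz ih => exact hB _ _ ih hyz.2.1 hyz.2.2

lemma not_scOn_pair {x y : V} (hxy : x ≠ y) (hE : ¬ E x y) : ¬ SCOn E {x, y} := by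
  intro h
  have hclosed :
      ∀ u v, u ∈ ({x} : Set V) → v ∈ ({x, y} : Set V) → E u v → v ∈ ({x} : Set V) := by
    rintro u v rfl (rfl | rfl) huv
    exacts [rfl, absurd huv hE]
  exact hxy (mem_of_reflTransGen_restrict E hclosed rfl (h x (by simp) y (by simp))).symm

lemma IsPart.not_scOn_compl_nout {A : Set V} (hA : IsPart E A) : ¬ SCOn E (Nout E A)ᶜ := by
  obtain ⟨⟨a, ha⟩, ⟨c, hc⟩⟩ := hA
  simp only [Set.mem_compl_iff, Set.mem_union, not_or] at hc
  intro h
  have hclosed : ∀ u v, u ∈ A → v ∈ (Nout E A)ᶜ → E u v → v ∈ A :=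
    fun u v hu hv huv => by_contra fun hvA => hv ⟨hvA, u, hu, huv⟩
  exact hc.1 (mem_of_reflTransGen_restrict E hclosed ha (h a (fun ha' => ha'.1 ha) c hc.2))

/-- The vertices reachable from `a` inside `Tᶜ` form a part whose out-neighbourhood lies in `T`. -/
lemma exists_isPart_nout_subset {T : Set V} (hT : ¬ SCOn E Tᶜ) :
    ∃ A : Set V, IsPart E A ∧ Nout E A ⊆ T := by
  simp only [SCOn, not_forall] at hT
  obtain ⟨a, ha, b, hb, hab⟩ := hT
  set A : Set V := {v | v ∈ Tᶜ ∧ Relation.ReflTransGen (fun x y => x ∈ Tᶜ ∧ y ∈ Tᶜ ∧ E x y) a v}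
  have hN : Nout E A ⊆ T := by
    rintro z ⟨hzA, w, hw, hwz⟩
    by_contra hzT
    exact hzA ⟨hzT, hw.2.tail ⟨hw.1, hzT, hwz⟩⟩
  refine ⟨A, ⟨⟨a, ha, .refl⟩, b, ?_⟩, hN⟩
  rintro (hbA | hbN)
  exacts [hab hbA.2, hb (hN hbN)]

end Reachability

section Connectivity

variable {V : Type*} [Finite V] (E : V → V → Prop)

lemma kappa_transpose : kappa (fun x y => E y x) = kappa E := by
  simp only [kappa, scOn_transpose_iff]

lemma kappa_le_ncard {T : Set V} (hT : ¬ SCOn E Tᶜ) : kappa E ≤ T.ncard := by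
  rw [kappa, if_pos ⟨T, hT⟩]
  exact Nat.sInf_le ⟨T, rfl, hT⟩

lemma exists_ncard_eq_kappa {T : Set V} (hT : ¬ SCOn E Tᶜ) :
    ∃ T' : Set V, T'.ncard = kappa E ∧ ¬ SCOn E T'ᶜ := by
  rw [kappa, if_pos ⟨T, hT⟩]
  exact Nat.sInf_mem (s := {m | ∃ T : Set V, T.ncard = m ∧ ¬ SCOn E Tᶜ}) ⟨_, T, rfl, hT⟩

lemma IsPart.kappa_le_ncard_nout {A : Set V} (hA : IsPart E A) : kappa E ≤ (Nout E A).ncard :=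
  kappa_le_ncard E hA.not_scOn_compl_nout

lemma exists_isPart_ncard_nout_eq_kappa {x y : V} (hxy : x ≠ y) (hE : ¬ E x y) :
    ∃ A : Set V, IsPart E A ∧ (Nout E A).ncard = kappa E := by
  have hpair : ¬ SCOn E ({x, y}ᶜ : Set V)ᶜ := by
    rw [compl_compl]
    exact not_scOn_pair E hxy hE
  obtain ⟨T, hTκ, hT⟩ := exists_ncard_eq_kappa E hpair
  obtain ⟨A, hA, hAT⟩ := exists_isPart_nout_subset E hT
  exact ⟨A, hA, le_antisymm (hTκ ▸ Set.ncard_le_ncard hAT) hA.kappa_le_ncard_nout⟩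

lemma exists_isAtomD {x y : V} (hxy : x ≠ y) (hE : ¬ E x y) : ∃ A : Set V, IsAtomD E A := by
  let sizes : Set ℕ := {m | ∃ B : Set V, IsPart E B ∧ (Nout E B).ncard = kappa E ∧ B.ncard = m}
  obtain ⟨A₀, hA₀, hA₀κ⟩ := exists_isPart_ncard_nout_eq_kappa E hxy hE
  obtain ⟨A, hA, hAκ, hAmin⟩ : sInf sizes ∈ sizes := Nat.sInf_mem ⟨_, A₀, hA₀, hA₀κ, rfl⟩
  exact ⟨A, hA, hAκ, fun B hB hBκ => hAmin ▸ Nat.sInf_le ⟨B, hB, hBκ, rfl⟩⟩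

end Connectivity

section Transpose

variable {V : Type*} (E : V → V → Prop)

lemma nout_transpose_compl_subset (A : Set V) :
    Nout (fun x y => E y x) (A ∪ Nout E A)ᶜ ⊆ Nout E A := by
  rintro z ⟨hz, w, hw, hzw⟩
  rcases Set.not_notMem.mp hz with hzA | hzN
  · exact absurd (Or.inr ⟨fun hwA => hw (Or.inl hwA), z, hzA, hzw⟩) hw
  · exact hzN

lemma IsPart.compl_isPart_transpose {A : Set V} (hA : IsPart E A) :
    IsPart (fun x y => E y x) (A ∪ Nout E A)ᶜ := by
  obtain ⟨⟨a, ha⟩, hC⟩ := hA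
  refine ⟨hC, a, ?_⟩
  rintro (haC | haN)
  exacts [haC (Or.inl ha), (nout_transpose_compl_subset E A haN).1 ha]

lemma IsAtomD.ncard_add_ncard_le [Finite V] {A B : Set V} (hA : IsAtomD E A)
    (hB : IsAtomD (fun x y => E y x) B) : A.ncard + B.ncard ≤ Nat.card V - kappa E := by
  obtain ⟨hApart, hAκ, -⟩ := hA
  set C := (A ∪ Nout E A)ᶜ
  have hCpart := hApart.compl_isPart_transpose
  have hCκ : (Nout (fun x y => E y x) C).ncard = kappa (fun x y => E y x) := by
    refine le_antisymm ?_ hCpart.kappa_le_ncard_nout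
    rw [kappa_transpose, ← hAκ]
    exact Set.ncard_le_ncard (nout_transpose_compl_subset E A)
  have hBC : B.ncard ≤ C.ncard := hB.2.2 C hCpart hCκ
  have hdisj : Disjoint A (Nout E A) := Set.disjoint_left.mpr fun _ hx hx' => hx'.1 hx
  have hcard : A.ncard + kappa E + C.ncard = Nat.card V := by
    rw [← hAκ, ← Set.ncard_union_eq hdisj, Set.ncard_add_ncard_compl]
  omega

end Transpose

/-- A non-complete digraph `D` on `n` vertices has, in `D` or in its transpose `D*`,
an atom `A` with `2|A| ≤ n − κ`. -/
theorem stmt_5 {V : Type*} [Finite V] (E : V → V → Prop)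
    (hnc : ∃ x y : V, x ≠ y ∧ ¬ E x y) :
    (∃ A : Set V, IsAtomD E A ∧ 2 * A.ncard ≤ Nat.card V - kappa E) ∨
    (∃ A : Set V, IsAtomD (fun x y => E y x) A ∧
      2 * A.ncard ≤ Nat.card V - kappa (fun x y => E y x)) := by
  obtain ⟨x, y, hxy, hE⟩ := hnc
  obtain ⟨A, hA⟩ := exists_isAtomD E hxy hE
  obtain ⟨B, hB⟩ := exists_isAtomD (fun x y => E y x) hxy.symm hE
  have hsum := hA.ncard_add_ncard_le E hB
  have hκ := kappa_transpose E
  rcases le_total A.ncard B.ncard with hAB | hBA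
  · exact Or.inl ⟨A, hA, by omega⟩
  · exact Or.inr ⟨B, hB, by omega⟩
end
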